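/- arXiv:0710.5907 — 3 statements merged into one kernel-verified Lean document; each statement's English description precedes it below -/
import Mathlib

section
/- For all real numbers 0 < y₁ < y₂ and every p ∈ [1,∞], f(y₁, y₂, p) ≤ f(y₁, y₂, 2); that is, the function p ↦ f(y₁, y₂, p) attains its maximum on [1,∞] at p = 2. -/
open Real
open scoped ENNReal

/-- The coefficient `f(y₁,y₂,p)` for `p ∈ (1,∞)`, with dual exponent `q`. -/
noncomputable def fCoeff (y₁ y₂ p q : ℝ) : ℝ :=
  ((y₁ + 2) ^ 2 * y₂ ^ 2 * Gamma ((y₁ + 2) / p) * Gamma ((y₁ + 2) / q) *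
      Gamma (y₂ / p) * Gamma (y₂ / q)) /
    (y₁ ^ 2 * (y₂ + 2) ^ 2 * Gamma ((y₂ + 2) / p) * Gamma ((y₂ + 2) / q) *
      Gamma (y₁ / p) * Gamma (y₁ / q))

/-- The coefficient `f(y₁,y₂,1) = f(y₁,y₂,∞)`. -/
noncomputable def fCoeffOne (y₁ y₂ : ℝ) : ℝ :=
  ((y₁ + 2) * y₂ * Gamma (y₁ + 2) * Gamma y₂) /
    (y₁ * (y₂ + 2) * Gamma (y₂ + 2) * Gamma y₁)

/-- The coefficient `f(y₁,y₂,p)` for all `p ∈ [1,∞]`; for `1 < p < ∞` the dual exponent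
is `q = p/(p-1)`. -/
noncomputable def fCoeffFull (y₁ y₂ : ℝ) (p : ℝ≥0∞) : ℝ :=
  if p = 1 ∨ p = ∞ then fCoeffOne y₁ y₂
  else fCoeff y₁ y₂ p.toReal (p.toReal / (p.toReal - 1))

/-!
Write `D(p) = log Γ(y₁/p) - log Γ((y₁+2)/p) - (log Γ(y₂/p) - log Γ((y₂+2)/p))` and
`P = (y₁+2) y₂ / (y₁ (y₂+2))`, so that `f(y₁,y₂,p) = P² exp (-(D(p) + D(q)))`.
Expanding the factors of Euler's product for `Γ` as Frullani integrals and summing the resulting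
geometric series gives `D(p) = ∫₀^∞ K(σ) / (1 - e^{-pσ}) dσ` with the nonnegative kernel
`K(σ) = (1 - e^{-2σ}) (e^{-y₁σ} - e^{-y₂σ}) / σ`. Convexity of `t ↦ t / (1 - e^{-t})` at the points
`pσ`, `qσ` with weights `1/p`, `1/q` gives `2/(1 - e^{-2σ}) ≤ 1/(1 - e^{-pσ}) + 1/(1 - e^{-qσ})`,
hence `2 D(2) ≤ D(p) + D(q)`. For `p = 1` the weight of `q = ∞` is `1`, and `∫₀^∞ K = log P`.
-/

open Set MeasureTheory Filter Topology

lemma one_sub_exp_neg_pos {t : ℝ} (ht : 0 < t) : 0 < 1 - exp (-t) :=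
  sub_pos.2 (exp_lt_one_iff.2 (neg_lt_zero.2 ht))

lemma exp_neg_mul_sub_exp_neg_mul_nonneg {a b σ : ℝ} (hab : a ≤ b) (hσ : 0 ≤ σ) :
    0 ≤ exp (-(a * σ)) - exp (-(b * σ)) :=
  sub_nonneg.2 (exp_le_exp.2 (by nlinarith))

lemma exp_neg_mul_sub_exp_neg_mul_le (a b σ : ℝ) :
    exp (-(a * σ)) - exp (-(b * σ)) ≤ (b - a) * σ * exp (-(a * σ)) := by
  have h : exp (-(b * σ)) = exp (-(a * σ)) * exp (-((b - a) * σ)) := by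
    rw [← exp_add]; ring_nf
  rw [h]
  nlinarith [add_one_le_exp (-((b - a) * σ)), exp_pos (-(a * σ))]

theorem integrableOn_exp_neg_mul_sub_exp_neg_mul_div {a b : ℝ} (ha : 0 < a) (hab : a ≤ b) :
    IntegrableOn (fun σ => (exp (-(a * σ)) - exp (-(b * σ))) / σ) (Ioi 0) := by
  have hdom : IntegrableOn (fun σ => (b - a) * exp (-a * σ)) (Ioi 0) :=
    (exp_neg_integrableOn_Ioi 0 ha).const_mul (b - a)
  refine hdom.mono' (ContinuousOn.aestronglyMeasurable ?_ measurableSet_Ioi) ?_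
  · exact ContinuousOn.div (by fun_prop) continuousOn_id fun σ hσ => (mem_Ioi.1 hσ).ne'
  · refine (ae_restrict_iff' measurableSet_Ioi).2 (Eventually.of_forall fun σ (hσ : 0 < σ) => ?_)
    rw [norm_of_nonneg (div_nonneg (exp_neg_mul_sub_exp_neg_mul_nonneg hab hσ.le) hσ.le),
      div_le_iff₀ hσ, neg_mul]
    linarith [exp_neg_mul_sub_exp_neg_mul_le a b σ]

theorem integral_exp_neg_mul_sub_exp_neg_mul_div {a b : ℝ} (ha : 0 < a) (hab : a ≤ b) :
    ∫ σ in Ioi 0, (exp (-(a * σ)) - exp (-(b * σ))) / σ = log b - log a := by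
  have hb : 0 < b := ha.trans_le hab
  have hcont : Continuous fun t : ℝ => exp (-t) := by fun_prop
  have h := Frullani.integral_Ioi_eq (L := 1) (R := 0)
    (hcont.locallyIntegrable.locallyIntegrableOn _) ha hb
    (by simpa using (hcont.tendsto 0).mono_left nhdsWithin_le_nhds)
    tendsto_exp_neg_atTop_nhds_zero
    (by simpa only [smul_eq_mul, inv_mul_eq_div] using
      integrableOn_exp_neg_mul_sub_exp_neg_mul_div ha hab)
  simpa only [smul_eq_mul, inv_mul_eq_div, sub_zero, mul_one, log_div hb.ne' ha.ne'] using h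

noncomputable def shiftKernel (s x y σ : ℝ) : ℝ :=
  (1 - exp (-(s * σ))) * (exp (-(x * σ)) - exp (-(y * σ))) / σ

lemma shiftKernel_nonneg {s x y σ : ℝ} (hs : 0 ≤ s) (hxy : x ≤ y) (hσ : 0 ≤ σ) :
    0 ≤ shiftKernel s x y σ := by
  have h : 0 ≤ 1 - exp (-(s * σ)) := sub_nonneg.2 (exp_le_one_iff.2 (by nlinarith))
  exact div_nonneg (mul_nonneg h (exp_neg_mul_sub_exp_neg_mul_nonneg hxy hσ)) hσ

lemma continuousOn_shiftKernel (s x y : ℝ) : ContinuousOn (shiftKernel s x y) (Ioi 0) :=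
  ContinuousOn.div (by fun_prop) continuousOn_id fun _ hσ => (mem_Ioi.1 hσ).ne'

lemma shiftKernel_add_add (s x y u σ : ℝ) :
    shiftKernel s (x + u) (y + u) σ = exp (-(u * σ)) * shiftKernel s x y σ := by
  simp only [shiftKernel, add_mul, neg_add, exp_add]
  ring

lemma shiftKernel_eq_sub (s x y σ : ℝ) :
    shiftKernel s x y σ = (exp (-(x * σ)) - exp (-(y * σ))) / σ
      - (exp (-((x + s) * σ)) - exp (-((y + s) * σ))) / σ := by
  simp only [shiftKernel, add_mul, neg_add, exp_add]
  ring

theorem integrableOn_shiftKernel {s x y : ℝ} (hs : 0 ≤ s) (hx : 0 < x) (hxy : x ≤ y) :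
    IntegrableOn (shiftKernel s x y) (Ioi 0) := by
  simp only [funext (shiftKernel_eq_sub s x y)]
  exact (integrableOn_exp_neg_mul_sub_exp_neg_mul_div hx hxy).sub
    (integrableOn_exp_neg_mul_sub_exp_neg_mul_div (by linarith) (by linarith))

theorem integral_shiftKernel {s x y : ℝ} (hs : 0 ≤ s) (hx : 0 < x) (hxy : x ≤ y) :
    ∫ σ in Ioi 0, shiftKernel s x y σ = log (x + s) - log x - (log (y + s) - log y) := by
  simp only [shiftKernel_eq_sub s x y]
  rw [integral_sub (integrableOn_exp_neg_mul_sub_exp_neg_mul_div hx hxy)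
    (integrableOn_exp_neg_mul_sub_exp_neg_mul_div (by linarith) (by linarith)),
    integral_exp_neg_mul_sub_exp_neg_mul_div hx hxy,
    integral_exp_neg_mul_sub_exp_neg_mul_div (by linarith) (by linarith)]
  ring

lemma hasSum_shiftKernel_add_mul_natCast (s x y : ℝ) {p σ : ℝ} (hp : 0 < p) (hσ : 0 < σ) :
    HasSum (fun k : ℕ => shiftKernel s (x + p * k) (y + p * k) σ)
      (shiftKernel s x y σ / (1 - exp (-(p * σ)))) := by
  have hr : exp (-(p * σ)) < 1 := sub_pos.1 (one_sub_exp_neg_pos (mul_pos hp hσ))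
  have hk : ∀ k : ℕ, shiftKernel s (x + p * k) (y + p * k) σ =
      exp (-(p * σ)) ^ k * shiftKernel s x y σ := fun k => by
    rw [shiftKernel_add_add, ← exp_nat_mul]; ring_nf
  simpa only [hk, div_eq_inv_mul] using
    (hasSum_geometric_of_lt_one (exp_pos _).le hr).mul_right (shiftKernel s x y σ)

theorem MeasureTheory.integrable_and_hasSum_integral_of_nonneg {α ι : Type*} [Countable ι]
    [MeasurableSpace α] {μ : Measure α} {F : ι → α → ℝ} {f : α → ℝ}
    (hf : AEStronglyMeasurable f μ) (hF : ∀ k, Integrable (F k) μ) (hF₀ : ∀ k, 0 ≤ᵐ[μ] F k)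
    (hFf : ∀ᵐ a ∂μ, HasSum (F · a) (f a)) (hsum : Summable fun k => ∫ a, F k a ∂μ) :
    Integrable f μ ∧ HasSum (fun k => ∫ a, F k a ∂μ) (∫ a, f a ∂μ) := by
  have hF₀' : ∀ᵐ a ∂μ, ∀ k, 0 ≤ F k a := ae_all_iff.2 hF₀
  have hf₀ : 0 ≤ᵐ[μ] f := by
    filter_upwards [hFf, hF₀'] with a ha h₀ using ha.nonneg h₀
  have hint₀ : ∀ k, 0 ≤ ∫ a, F k a ∂μ := fun k => integral_nonneg_of_ae (hF₀ k)
  have hlin : ∫⁻ a, ENNReal.ofReal (f a) ∂μ = ENNReal.ofReal (∑' k, ∫ a, F k a ∂μ) := by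
    calc ∫⁻ a, ENNReal.ofReal (f a) ∂μ = ∫⁻ a, ∑' k, ENNReal.ofReal (F k a) ∂μ := by
          refine lintegral_congr_ae ?_
          filter_upwards [hFf, hF₀'] with a ha h₀
          rw [← ENNReal.ofReal_tsum_of_nonneg h₀ ha.summable, ha.tsum_eq]
      _ = ∑' k, ENNReal.ofReal (∫ a, F k a ∂μ) := by
          rw [lintegral_tsum fun k => (hF k).aemeasurable.ennreal_ofReal]
          exact tsum_congr fun k => (ofReal_integral_eq_lintegral_ofReal (hF k) (hF₀ k)).symm
      _ = _ := (ENNReal.ofReal_tsum_of_nonneg hint₀ hsum).symm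
  have hint : Integrable f μ :=
    ⟨hf, (hasFiniteIntegral_iff_ofReal hf₀).2 (hlin ▸ ENNReal.ofReal_lt_top)⟩
  refine ⟨hint, ?_⟩
  rw [integral_eq_lintegral_of_nonneg_ae hf₀ hf, hlin,
    ENNReal.toReal_ofReal (tsum_nonneg hint₀)]
  exact hsum.hasSum

theorem Real.tendsto_sum_log_sub_log_Gamma {x y s : ℝ} (hx : 0 < x) (hy : 0 < y) (hs : 0 ≤ s) :
    Tendsto (fun n => ∑ k ∈ Finset.range n,
        (log (x + s + k) - log (x + k) - (log (y + s + k) - log (y + k)))) atTop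
      (𝓝 (log (Gamma x) - log (Gamma (x + s)) - (log (Gamma y) - log (Gamma (y + s))))) := by
  have h := ((BohrMollerup.tendsto_log_gamma hx).sub
    (BohrMollerup.tendsto_log_gamma (by linarith : 0 < x + s))).sub
    ((BohrMollerup.tendsto_log_gamma hy).sub
    (BohrMollerup.tendsto_log_gamma (by linarith : 0 < y + s)))
  rw [← tendsto_add_atTop_iff_nat 1]
  refine h.congr fun n => ?_
  simp only [BohrMollerup.logGammaSeq, Finset.sum_sub_distrib]
  ring

noncomputable def logGammaRatio (s x y p : ℝ) : ℝ :=
  log (Gamma (x / p)) - log (Gamma ((x + s) / p)) -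
    (log (Gamma (y / p)) - log (Gamma ((y + s) / p)))

lemma log_div_add_natCast {z p : ℝ} (hz : 0 < z) (hp : 0 < p) (k : ℕ) :
    log (z / p + k) = log (z + p * k) - log p := by
  rw [← log_div (by positivity) hp.ne']
  congr 1
  field_simp

theorem hasSum_integral_shiftKernel_add_mul_natCast {s x y p : ℝ} (hs : 0 ≤ s) (hx : 0 < x)
    (hxy : x ≤ y) (hp : 0 < p) :
    HasSum (fun k : ℕ => ∫ σ in Ioi 0, shiftKernel s (x + p * k) (y + p * k) σ)
      (logGammaRatio s x y p) := by
  have hy : 0 < y := hx.trans_le hxy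
  have hterm : ∀ k : ℕ, ∫ σ in Ioi 0, shiftKernel s (x + p * k) (y + p * k) σ =
      log (x / p + s / p + k) - log (x / p + k) - (log (y / p + s / p + k) - log (y / p + k)) := by
    intro k
    rw [integral_shiftKernel hs (by positivity) (by linarith), ← add_div, ← add_div,
      log_div_add_natCast hx hp, log_div_add_natCast hy hp,
      log_div_add_natCast (by linarith) hp, log_div_add_natCast (by linarith) hp]
    ring_nf
  refine (hasSum_iff_tendsto_nat_of_nonneg (fun k => ?_) _).2 ?_
  · exact setIntegral_nonneg measurableSet_Ioi fun σ (hσ : 0 < σ) =>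
      shiftKernel_nonneg hs (by linarith) hσ.le
  · simp only [hterm, logGammaRatio, add_div]
    exact tendsto_sum_log_sub_log_Gamma (by positivity) (by positivity) (by positivity)

theorem logGammaRatio_eq_integral {s x y p : ℝ} (hs : 0 ≤ s) (hx : 0 < x) (hxy : x ≤ y)
    (hp : 0 < p) :
    IntegrableOn (fun σ => shiftKernel s x y σ / (1 - exp (-(p * σ)))) (Ioi 0) ∧
      logGammaRatio s x y p = ∫ σ in Ioi 0, shiftKernel s x y σ / (1 - exp (-(p * σ))) := by
  have hcont : ContinuousOn (fun σ => shiftKernel s x y σ / (1 - exp (-(p * σ)))) (Ioi 0) :=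
    (continuousOn_shiftKernel s x y).div (by fun_prop) fun σ hσ =>
      (one_sub_exp_neg_pos (mul_pos hp hσ)).ne'
  have hsum := hasSum_integral_shiftKernel_add_mul_natCast hs hx hxy hp
  obtain ⟨hint, hsum'⟩ := integrable_and_hasSum_integral_of_nonneg
    (hcont.aestronglyMeasurable measurableSet_Ioi)
    (fun k => integrableOn_shiftKernel hs (by positivity) (by linarith))
    (fun k => (ae_restrict_iff' measurableSet_Ioi).2 (Eventually.of_forall fun σ (hσ : 0 < σ) =>
      shiftKernel_nonneg hs (by linarith) hσ.le))
    ((ae_restrict_iff' measurableSet_Ioi).2 (Eventually.of_forall fun σ hσ =>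
      hasSum_shiftKernel_add_mul_natCast s x y hp hσ))
    hsum.summable
  exact ⟨hint, hsum.unique hsum'⟩

lemma sub_two_add_add_two_mul_exp_neg_nonneg {t : ℝ} (ht : 0 ≤ t) :
    0 ≤ t - 2 + (t + 2) * exp (-t) := by
  have hmono : MonotoneOn (fun t => t - 2 + (t + 2) * exp (-t)) (Ici 0) := by
    refine monotoneOn_of_hasDerivWithinAt_nonneg (f' := fun t => 1 - (t + 1) * exp (-t))
      (convex_Ici 0) (by fun_prop) (fun t _ => ?_) (fun t _ => ?_)
    · exact ((((hasDerivAt_id' t).sub_const 2).add (((hasDerivAt_id' t).add_const 2).mul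
        (hasDerivAt_neg t).exp)).congr_deriv (by ring)).hasDerivWithinAt
    · have h := mul_le_mul_of_nonneg_right (add_one_le_exp t) (exp_pos (-t)).le
      rw [← exp_add, add_neg_cancel, exp_zero] at h
      linarith
  simpa using hmono self_mem_Ici ht ht

theorem convexOn_div_one_sub_exp_neg : ConvexOn ℝ (Ioi 0) fun t => t / (1 - exp (-t)) := by
  have hden : ∀ t ∈ Ioi (0 : ℝ), 1 - exp (-t) ≠ 0 := fun t ht => (one_sub_exp_neg_pos ht).ne'
  refine convexOn_of_hasDerivWithinAt2_nonneg (convex_Ioi 0)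
    (f' := fun t => (1 - exp (-t) - t * exp (-t)) / (1 - exp (-t)) ^ 2)
    (f'' := fun t => exp (-t) * (t - 2 + (t + 2) * exp (-t)) / (1 - exp (-t)) ^ 3)
    (continuousOn_id.div (by fun_prop) hden) ?_ ?_ ?_ <;> rw [interior_Ioi] <;> intro t ht
  · exact ((hasDerivAt_id' t).div ((hasDerivAt_neg t).exp.const_sub 1)
      (hden t ht)).congr_deriv (by field_simp) |>.hasDerivWithinAt
  · have h := (((hasDerivAt_neg t).exp.const_sub 1).sub ((hasDerivAt_id' t).mul
      (hasDerivAt_neg t).exp)).div (((hasDerivAt_neg t).exp.const_sub 1).pow 2)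
      (pow_ne_zero 2 (hden t ht))
    refine (h.congr_deriv ?_).hasDerivWithinAt
    have := hden t ht
    simp only [Pi.sub_apply, Pi.mul_apply, Pi.pow_apply]
    field_simp
    ring
  · have := one_sub_exp_neg_pos ht
    have := sub_two_add_add_two_mul_exp_neg_nonneg (le_of_lt ht)
    positivity

lemma two_div_one_sub_exp_neg_two_mul_le {p q σ : ℝ} (h : p.HolderConjugate q) (hσ : 0 < σ) :
    2 / (1 - exp (-(2 * σ))) ≤ 1 / (1 - exp (-(p * σ))) + 1 / (1 - exp (-(q * σ))) := by
  have hp := h.pos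
  have hq := h.symm.pos
  have hjensen := convexOn_div_one_sub_exp_neg.2 (mem_Ioi.2 (mul_pos hp hσ))
    (mem_Ioi.2 (mul_pos hq hσ)) h.inv_nonneg h.symm.inv_nonneg h.inv_add_inv_eq_one
  have hmid : p⁻¹ * (p * σ) + q⁻¹ * (q * σ) = 2 * σ := by field_simp; ring
  simp only [smul_eq_mul, hmid] at hjensen
  have := one_sub_exp_neg_pos (mul_pos hp hσ)
  have := one_sub_exp_neg_pos (mul_pos hq hσ)
  calc 2 / (1 - exp (-(2 * σ))) = 2 * σ / (1 - exp (-(2 * σ))) / σ := by field_simp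
    _ ≤ (p⁻¹ * (p * σ / (1 - exp (-(p * σ)))) + q⁻¹ * (q * σ / (1 - exp (-(q * σ))))) / σ := by
        gcongr
    _ = 1 / (1 - exp (-(p * σ))) + 1 / (1 - exp (-(q * σ))) := by field_simp

lemma two_div_one_sub_exp_neg_two_mul_le_one_add {σ : ℝ} (hσ : 0 < σ) :
    2 / (1 - exp (-(2 * σ))) ≤ 1 + 1 / (1 - exp (-σ)) := by
  have hu : 0 < exp (-σ) := exp_pos _
  have hu₁ := one_sub_exp_neg_pos hσ
  have hsq : exp (-(2 * σ)) = exp (-σ) ^ 2 := by rw [← exp_nat_mul]; ring_nf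
  rw [hsq, div_le_iff₀ (by nlinarith)]
  have h : (1 + 1 / (1 - exp (-σ))) * (1 - exp (-σ) ^ 2) = 2 + exp (-σ) - exp (-σ) ^ 2 := by
    field_simp; ring
  nlinarith

theorem two_mul_logGammaRatio_two_le {s x y p q : ℝ} (hs : 0 ≤ s) (hx : 0 < x) (hxy : x ≤ y)
    (h : p.HolderConjugate q) :
    2 * logGammaRatio s x y 2 ≤ logGammaRatio s x y p + logGammaRatio s x y q := by
  obtain ⟨hint₂, heq₂⟩ := logGammaRatio_eq_integral hs hx hxy two_pos
  obtain ⟨hintp, heqp⟩ := logGammaRatio_eq_integral hs hx hxy h.pos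
  obtain ⟨hintq, heqq⟩ := logGammaRatio_eq_integral hs hx hxy h.symm.pos
  rw [heq₂, heqp, heqq, ← integral_const_mul, ← integral_add hintp hintq]
  refine setIntegral_mono_on (hint₂.const_mul 2) (hintp.add hintq) measurableSet_Ioi
    fun σ (hσ : 0 < σ) => ?_
  have hK := shiftKernel_nonneg hs hxy hσ.le
  have hw := two_div_one_sub_exp_neg_two_mul_le h hσ
  calc 2 * (shiftKernel s x y σ / (1 - exp (-(2 * σ))))
      = shiftKernel s x y σ * (2 / (1 - exp (-(2 * σ)))) := by ring
    _ ≤ shiftKernel s x y σ * (1 / (1 - exp (-(p * σ))) + 1 / (1 - exp (-(q * σ)))) := by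
        gcongr
    _ = _ := by ring

theorem two_mul_logGammaRatio_two_le_one_add {s x y : ℝ} (hs : 0 ≤ s) (hx : 0 < x)
    (hxy : x ≤ y) :
    2 * logGammaRatio s x y 2 ≤
      logGammaRatio s x y 1 + (log (x + s) - log x - (log (y + s) - log y)) := by
  obtain ⟨hint₂, heq₂⟩ := logGammaRatio_eq_integral hs hx hxy two_pos
  obtain ⟨hint₁, heq₁⟩ := logGammaRatio_eq_integral hs hx hxy one_pos
  rw [heq₂, heq₁, ← integral_shiftKernel hs hx hxy, ← integral_const_mul,
    ← integral_add hint₁ (integrableOn_shiftKernel hs hx hxy)]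
  refine setIntegral_mono_on (hint₂.const_mul 2) (hint₁.add (integrableOn_shiftKernel hs hx hxy))
    measurableSet_Ioi fun σ (hσ : 0 < σ) => ?_
  have hK := shiftKernel_nonneg hs hxy hσ.le
  have hw := two_div_one_sub_exp_neg_two_mul_le_one_add hσ
  rw [one_mul]
  calc 2 * (shiftKernel s x y σ / (1 - exp (-(2 * σ))))
      = shiftKernel s x y σ * (2 / (1 - exp (-(2 * σ)))) := by ring
    _ ≤ shiftKernel s x y σ * (1 + 1 / (1 - exp (-σ))) := by gcongr
    _ = _ := by ring

lemma exp_logGammaRatio {s x y p : ℝ} (hs : 0 ≤ s) (hx : 0 < x) (hy : 0 < y) (hp : 0 < p) :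
    exp (logGammaRatio s x y p) =
      Gamma (x / p) * Gamma ((y + s) / p) / (Gamma ((x + s) / p) * Gamma (y / p)) := by
  rw [logGammaRatio, exp_sub, exp_sub, exp_sub, exp_log (by positivity), exp_log (by positivity),
    exp_log (by positivity), exp_log (by positivity), div_div_div_eq]

lemma fCoeff_eq_div_exp {y₁ y₂ p q : ℝ} (hy₁ : 0 < y₁) (hy₂ : 0 < y₂) (hp : 0 < p) (hq : 0 < q) :
    fCoeff y₁ y₂ p q = ((y₁ + 2) * y₂ / (y₁ * (y₂ + 2))) ^ 2 /
      exp (logGammaRatio 2 y₁ y₂ p + logGammaRatio 2 y₁ y₂ q) := by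
  rw [exp_add, exp_logGammaRatio zero_le_two hy₁ hy₂ hp, exp_logGammaRatio zero_le_two hy₁ hy₂ hq,
    fCoeff]
  field_simp

lemma fCoeffOne_eq_div_exp {y₁ y₂ : ℝ} (hy₁ : 0 < y₁) (hy₂ : 0 < y₂) :
    fCoeffOne y₁ y₂ = ((y₁ + 2) * y₂ / (y₁ * (y₂ + 2))) ^ 2 /
      exp (logGammaRatio 2 y₁ y₂ 1 + (log (y₁ + 2) - log y₁ - (log (y₂ + 2) - log y₂))) := by
  rw [exp_add, exp_logGammaRatio zero_le_two hy₁ hy₂ one_pos, exp_sub, exp_sub, exp_sub,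
    exp_log hy₁, exp_log hy₂, exp_log (by linarith), exp_log (by linarith), fCoeffOne]
  simp only [div_one]
  field_simp

theorem fCoeff_le_fCoeff_two_two {y₁ y₂ p q : ℝ} (hy₁ : 0 < y₁) (hy : y₁ ≤ y₂)
    (h : p.HolderConjugate q) : fCoeff y₁ y₂ p q ≤ fCoeff y₁ y₂ 2 2 := by
  have hy₂ := hy₁.trans_le hy
  rw [fCoeff_eq_div_exp hy₁ hy₂ h.pos h.symm.pos, fCoeff_eq_div_exp hy₁ hy₂ two_pos two_pos]
  gcongr _ / exp ?_
  linarith [two_mul_logGammaRatio_two_le zero_le_two hy₁ hy h]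

theorem fCoeffOne_le_fCoeff_two_two {y₁ y₂ : ℝ} (hy₁ : 0 < y₁) (hy : y₁ ≤ y₂) :
    fCoeffOne y₁ y₂ ≤ fCoeff y₁ y₂ 2 2 := by
  have hy₂ := hy₁.trans_le hy
  rw [fCoeffOne_eq_div_exp hy₁ hy₂, fCoeff_eq_div_exp hy₁ hy₂ two_pos two_pos]
  gcongr _ / exp ?_
  linarith [two_mul_logGammaRatio_two_le_one_add zero_le_two hy₁ hy]

/-- For all `0 < y₁ < y₂` and every `p ∈ [1,∞]`, `f(y₁,y₂,p) ≤ f(y₁,y₂,2)`: the function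
`p ↦ f(y₁,y₂,p)` attains its maximum on `[1,∞]` at `p = 2`. -/
theorem fCoeff_le_two (y₁ y₂ : ℝ) (hy₁ : 0 < y₁) (hy₂ : y₁ < y₂)
    (p : ℝ≥0∞) (hp : 1 ≤ p) :
    fCoeffFull y₁ y₂ p ≤ fCoeffFull y₁ y₂ 2 := by
  have htwo : fCoeffFull y₁ y₂ 2 = fCoeff y₁ y₂ 2 2 := by norm_num [fCoeffFull]
  rw [htwo, fCoeffFull]
  split_ifs with hp₁
  · exact fCoeffOne_le_fCoeff_two_two hy₁ hy₂.le
  · push Not at hp₁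
    have hp' : 1 < p.toReal := by
      simpa using (ENNReal.toReal_lt_toReal ENNReal.one_ne_top hp₁.2).2 (hp.lt_of_ne' hp₁.1)
    exact fCoeff_le_fCoeff_two_two hy₁ hy₂.le (Real.HolderConjugate.conjExponent hp')
end

section
/- For all real numbers 0 < y₁ < y₂, the function f₁ : [0,1] → ℝ defined by f₁(x) = f(y₁, y₂, 1/x) (interpreting 1/0 as ∞) satisfies the symmetry f₁(x) = f₁(1-x) for all x ∈ [0,1], and f₁(0) = f₁(1) < f₁(1/2). -/
open Real Set

/-- `f₁(x) = f(y₁, y₂, 1/x)` for `x ∈ [0,1]`, interpreting `1/0` as `∞`;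
for `x ∈ (0,1)` the exponent `p = 1/x` has dual exponent `q = 1/(1-x)`. -/
noncomputable def fOneVar (y₁ y₂ x : ℝ) : ℝ :=
  if x = 0 ∨ x = 1 then fCoeffOne y₁ y₂
  else fCoeff y₁ y₂ (1 / x) (1 / (1 - x))

lemma fCoeff_comm (y₁ y₂ p q : ℝ) : fCoeff y₁ y₂ p q = fCoeff y₁ y₂ q p := by
  unfold fCoeff
  ring

lemma fOneVar_one_sub (y₁ y₂ x : ℝ) : fOneVar y₁ y₂ (1 - x) = fOneVar y₁ y₂ x := by
  have hcond : (1 - x = 0 ∨ 1 - x = 1) ↔ (x = 0 ∨ x = 1) := by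
    constructor <;> rintro (h | h) <;> first | (left; linarith) | (right; linarith)
  unfold fOneVar
  rw [if_congr hcond rfl rfl, sub_sub_cancel, fCoeff_comm]

lemma fOneVar_zero_eq_one (y₁ y₂ : ℝ) : fOneVar y₁ y₂ 0 = fOneVar y₁ y₂ 1 := by
  simpa using fOneVar_one_sub y₁ y₂ 1

lemma Real.Gamma_add_two {s : ℝ} (hs₀ : s ≠ 0) (hs₁ : s + 1 ≠ 0) :
    Gamma (s + 2) = (s + 1) * s * Gamma s := by
  rw [show s + 2 = s + 1 + 1 by ring, Gamma_add_one hs₁, Gamma_add_one hs₀, mul_assoc]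

lemma fCoeffOne_eq {y₁ y₂ : ℝ} (hy₁ : 0 < y₁) (hy₂ : 0 < y₂) :
    fCoeffOne y₁ y₂ = (y₁ + 2) * (y₁ + 1) / ((y₂ + 2) * (y₂ + 1)) := by
  have := (Gamma_pos_of_pos hy₁).ne'
  have := (Gamma_pos_of_pos hy₂).ne'
  rw [fCoeffOne, Gamma_add_two hy₁.ne' (by positivity), Gamma_add_two hy₂.ne' (by positivity)]
  field_simp

lemma fCoeff_two_two {y₁ y₂ : ℝ} (hy₁ : 0 < y₁) (hy₂ : 0 < y₂) :
    fCoeff y₁ y₂ 2 2 = (y₁ + 2) ^ 2 / (y₂ + 2) ^ 2 := by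
  have half_add_one (y : ℝ) : (y + 2) / 2 = y / 2 + 1 := by ring
  have := (Gamma_pos_of_pos (half_pos hy₁)).ne'
  have := (Gamma_pos_of_pos (half_pos hy₂)).ne'
  rw [fCoeff, half_add_one, half_add_one, Gamma_add_one (by positivity),
    Gamma_add_one (by positivity)]
  field_simp

lemma fOneVar_zero (y₁ y₂ : ℝ) : fOneVar y₁ y₂ 0 = fCoeffOne y₁ y₂ := by
  simp [fOneVar]

lemma fOneVar_half (y₁ y₂ : ℝ) : fOneVar y₁ y₂ (1 / 2) = fCoeff y₁ y₂ 2 2 := by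
  norm_num [fOneVar]

/-- For `0 < y₁ < y₂`, the function `f₁(x) = f(y₁,y₂,1/x)` on `[0,1]` satisfies
`f₁(x) = f₁(1-x)` for all `x ∈ [0,1]`, and `f₁(0) = f₁(1) < f₁(1/2)`. -/
theorem fOneVar_symm_and_max (y₁ y₂ : ℝ) (hy₁ : 0 < y₁) (hy₂ : y₁ < y₂) :
    (∀ x ∈ Icc (0 : ℝ) 1, fOneVar y₁ y₂ x = fOneVar y₁ y₂ (1 - x)) ∧
      fOneVar y₁ y₂ 0 = fOneVar y₁ y₂ 1 ∧
      fOneVar y₁ y₂ 0 < fOneVar y₁ y₂ (1 / 2) := by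
  have hy₂_pos : 0 < y₂ := hy₁.trans hy₂
  refine ⟨fun x _ ↦ (fOneVar_one_sub y₁ y₂ x).symm, fOneVar_zero_eq_one y₁ y₂, ?_⟩
  rw [fOneVar_zero, fOneVar_half, fCoeffOne_eq hy₁ hy₂_pos, fCoeff_two_two hy₁ hy₂_pos,
    div_lt_div_iff₀ (by positivity) (by positivity)]
  nlinarith [mul_pos (by positivity : (0 : ℝ) < y₁ + 2) (by positivity : (0 : ℝ) < y₂ + 2)]
end

section
/- The function x ↦ x²·ψ'(x) is convex on the interval (0,∞), where ψ' is the trigamma function (the derivative of the digamma function ψ). -/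
open Real Set

/-- The digamma function `ψ`, the logarithmic derivative of the Gamma function. -/
noncomputable def digamma (x : ℝ) : ℝ :=
  deriv (fun t : ℝ => Real.log (Real.Gamma t)) x

/-- The trigamma function `ψ'`, the derivative of the digamma function. -/
noncomputable def trigamma (x : ℝ) : ℝ := deriv digamma x

/-!
Differentiating the Euler limit formula for `log Γ` twice gives `ψ'(x) = ∑ₖ (x + k)⁻²`. Writing
`x² (x + k)⁻² = ∫₀^∞ u e^{-(x + k) u / x} du` and summing the geometric series in `e^{-u/x}` gives
`x² ψ'(x) = ∫₀^∞ u e^{-u} (1 - e^{-u/x})⁻¹ du`, so it suffices that `x ↦ (1 - e^{-u/x})⁻¹` is convex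
for every `u > 0`. By scaling this is the convexity of `t ↦ (1 - e^{-1/t})⁻¹`, whose second
derivative has the sign of `1 - 2t + (1 + 2t) e^{-1/t}`, i.e. of `s (1 + e^{-s}) - 2 (1 - e^{-s})`
for `s = 1/t` (the inequality `tanh (s/2) ≤ s/2`).
-/

open Filter Topology MeasureTheory

lemma tendstoUniformlyOn_sum_range_succ_tsum {β F : Type*} [NormedAddCommGroup F]
    [CompleteSpace F] {f : ℕ → β → F} {u : ℕ → ℝ} {s : Set β} (hu : Summable u)
    (hfu : ∀ᶠ k in atTop, ∀ x ∈ s, ‖f k x‖ ≤ u k) :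
    TendstoUniformlyOn (fun n x => ∑ k ∈ Finset.range (n + 1), f k x) (fun x => ∑' k, f k x)
      atTop s :=
  fun v hv =>
    (tendsto_add_atTop_nat 1).eventually (tendstoUniformlyOn_tsum_nat_eventually hu hfu v hv)

lemma tendsto_log_sub_sum_range_succ_inv :
    Tendsto (fun n : ℕ => log n - ∑ k ∈ Finset.range (n + 1), ((k : ℝ) + 1)⁻¹) atTop
      (𝓝 (-eulerMascheroniConstant)) := by
  have h := ((tendsto_harmonic_sub_log.comp (tendsto_add_atTop_nat 1)).add
    tendsto_log_nat_add_one_sub_log).neg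
  simp only [Function.comp_apply, add_zero] at h
  refine h.congr fun n => ?_
  simp [harmonic]

lemma tendstoUniformlyOn_log_sub_sum_inv_add (M : ℝ) :
    TendstoUniformlyOn (fun (n : ℕ) (x : ℝ) => log n - ∑ k ∈ Finset.range (n + 1), (x + k)⁻¹)
      (fun x : ℝ => -eulerMascheroniConstant + ∑' k : ℕ, (((k : ℝ) + 1)⁻¹ - (x + k)⁻¹))
      atTop (Ioo 0 M) := by
  have hser := tendstoUniformlyOn_sum_range_succ_tsum
    (f := fun k (x : ℝ) => ((k : ℝ) + 1)⁻¹ - (x + k)⁻¹) (s := Ioo 0 M)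
    ((summable_nat_pow_inv.2 one_lt_two).mul_left (M + 1)) ?_
  · refine ((tendsto_log_sub_sum_range_succ_inv.tendstoUniformlyOn_const _).add hser).congr ?_
    refine Eventually.of_forall fun n x _ => ?_
    simp only [Pi.add_apply, Finset.sum_sub_distrib]
    ring
  · filter_upwards [eventually_ge_atTop 1] with k (hk : 1 ≤ k) x ⟨hx0, hxM⟩
    have hk : (1 : ℝ) ≤ k := by exact_mod_cast hk
    rw [inv_sub_inv (by positivity) (by positivity), norm_div, norm_mul, Real.norm_eq_abs,
      Real.norm_eq_abs, Real.norm_eq_abs, abs_of_pos (by positivity : (0 : ℝ) < k + 1),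
      abs_of_pos (by positivity : 0 < x + k), ← div_eq_mul_inv]
    exact div_le_div₀ (by linarith) (abs_le.2 ⟨by linarith, by linarith⟩) (by positivity)
      (by nlinarith)

lemma tendstoUniformlyOn_sum_inv_add_sq :
    TendstoUniformlyOn (fun n (x : ℝ) => ∑ k ∈ Finset.range (n + 1), ((x + k) ^ 2)⁻¹)
      (fun x : ℝ => ∑' k : ℕ, ((x + k) ^ 2)⁻¹) atTop (Ioi 0) := by
  refine tendstoUniformlyOn_sum_range_succ_tsum (summable_nat_pow_inv.2 one_lt_two) ?_
  filter_upwards [eventually_ge_atTop 1] with k (hk : 1 ≤ k) x (hx : 0 < x)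
  rw [norm_of_nonneg (by positivity)]
  exact inv_anti₀ (by positivity) (by gcongr; linarith)

lemma hasDerivAt_logGammaSeq (n : ℕ) {x : ℝ} (hx : 0 < x) :
    HasDerivAt (fun y => BohrMollerup.logGammaSeq y n)
      (log n - ∑ k ∈ Finset.range (n + 1), (x + k)⁻¹) x := by
  have hlog : ∀ k ∈ Finset.range (n + 1), HasDerivAt (fun y : ℝ => log (y + k)) (x + k)⁻¹ x :=
    fun k _ => by simpa using ((hasDerivAt_id x).add_const (k : ℝ)).log (by positivity)
  exact ((((hasDerivAt_id x).mul_const (log n)).add_const _).fun_sub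
    (HasDerivAt.fun_sum hlog)).congr_deriv (by simp)

lemma hasDerivAt_log_sub_sum_inv_add (n : ℕ) {x : ℝ} (hx : 0 < x) :
    HasDerivAt (fun y : ℝ => log n - ∑ k ∈ Finset.range (n + 1), (y + k)⁻¹)
      (∑ k ∈ Finset.range (n + 1), ((x + k) ^ 2)⁻¹) x := by
  have hinv : ∀ k ∈ Finset.range (n + 1),
      HasDerivAt (fun y : ℝ => (y + k)⁻¹) (-((x + k) ^ 2)⁻¹) x :=
    fun k _ => (((hasDerivAt_id x).add_const (k : ℝ)).fun_inv (by positivity)).congr_deriv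
      (by simp only [id_eq]; ring)
  simpa using (HasDerivAt.fun_sum hinv).const_sub (log n)

lemma hasDerivAt_log_Gamma {x : ℝ} (hx : 0 < x) :
    HasDerivAt (fun t => log (Gamma t))
      (-eulerMascheroniConstant + ∑' k : ℕ, (((k : ℝ) + 1)⁻¹ - (x + k)⁻¹)) x := by
  exact hasDerivAt_of_tendstoUniformlyOn (f := fun n y => BohrMollerup.logGammaSeq y n) isOpen_Ioo
    (tendstoUniformlyOn_log_sub_sum_inv_add (x + 1))
    (Eventually.of_forall fun n y hy => hasDerivAt_logGammaSeq n hy.1)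
    (fun y hy => BohrMollerup.tendsto_log_gamma hy.1) ⟨hx, lt_add_one x⟩

lemma hasDerivAt_digamma {x : ℝ} (hx : 0 < x) :
    HasDerivAt digamma (∑' k : ℕ, ((x + k) ^ 2)⁻¹) x := by
  have hD : HasDerivAt
      (fun y : ℝ => -eulerMascheroniConstant + ∑' k : ℕ, (((k : ℝ) + 1)⁻¹ - (y + k)⁻¹))
      (∑' k : ℕ, ((x + k) ^ 2)⁻¹) x :=
    hasDerivAt_of_tendstoUniformlyOn isOpen_Ioi tendstoUniformlyOn_sum_inv_add_sq
      (Eventually.of_forall fun n y hy => hasDerivAt_log_sub_sum_inv_add n hy)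
      (fun y hy => (tendstoUniformlyOn_log_sub_sum_inv_add (y + 1)).tendsto_at
        ⟨hy, lt_add_one y⟩) hx
  refine hD.congr_of_eventuallyEq ?_
  filter_upwards [Ioi_mem_nhds hx] with y hy using (hasDerivAt_log_Gamma hy).deriv

lemma trigamma_eq_tsum {x : ℝ} (hx : 0 < x) : trigamma x = ∑' k : ℕ, ((x + k) ^ 2)⁻¹ :=
  (hasDerivAt_digamma hx).deriv

lemma summable_inv_add_sq (x : ℝ) : Summable fun k : ℕ => ((x + k) ^ 2)⁻¹ := by
  refine ((summable_one_div_nat_add_rpow x 2).2 one_lt_two).congr fun k => ?_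
  rw [one_div, rpow_two, sq_abs, add_comm]

lemma integral_mul_exp_neg_mul {c : ℝ} (hc : 0 < c) :
    ∫ u in Ioi 0, u * exp (-(c * u)) = (c ^ 2)⁻¹ := by
  simpa [Gamma_two, show (2 : ℝ) - 1 = 1 by norm_num] using
    integral_rpow_mul_exp_neg_mul_Ioi two_pos hc

lemma integrableOn_mul_exp_neg_mul {c : ℝ} (hc : 0 < c) :
    IntegrableOn (fun u => u * exp (-(c * u))) (Ioi 0) :=
  Integrable.of_integral_ne_zero (by rw [integral_mul_exp_neg_mul hc]; positivity)

lemma sq_mul_tsum_inv_add_sq_eq_integral {x : ℝ} (hx : 0 < x) :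
    x ^ 2 * ∑' k : ℕ, ((x + k) ^ 2)⁻¹ =
      ∫ u in Ioi 0, u * exp (-u) * (1 - exp (-(u / x)))⁻¹ := by
  have hc : ∀ k : ℕ, 0 < (x + k) / x := fun k => by positivity
  have hF : ∀ k : ℕ, ∫ u in Ioi 0, u * exp (-((x + k) / x * u)) = x ^ 2 * ((x + k) ^ 2)⁻¹ :=
    fun k => by rw [integral_mul_exp_neg_mul (hc k), div_pow, inv_div, div_eq_mul_inv]
  have hF_norm : ∀ k : ℕ, ∫ u in Ioi 0, ‖u * exp (-((x + k) / x * u))‖ =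
      ∫ u in Ioi 0, u * exp (-((x + k) / x * u)) := fun k =>
    setIntegral_congr_fun measurableSet_Ioi fun u (hu : 0 < u) => norm_of_nonneg (by positivity)
  have hsum := hasSum_integral_of_summable_integral_norm
    (fun k => integrableOn_mul_exp_neg_mul (hc k))
    (by simpa only [hF_norm, hF] using (summable_inv_add_sq x).mul_left (x ^ 2))
  simp only [hF] at hsum
  rw [← tsum_mul_left, hsum.tsum_eq]
  refine setIntegral_congr_fun measurableSet_Ioi fun u (hu : 0 < u) => ?_
  have hq : exp (-(u / x)) < 1 := exp_lt_one_iff.2 (neg_neg_of_pos (div_pos hu hx))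
  have hexp : ∀ k : ℕ, exp (-((x + k) / x * u)) = exp (-u) * exp (-(u / x)) ^ k := fun k => by
    rw [← exp_nat_mul, ← exp_add]
    congr 1
    field_simp
    ring
  simp only [hexp, ← mul_assoc, tsum_mul_left, tsum_geometric_of_lt_one (exp_pos _).le hq]

lemma integrableOn_mul_exp_neg_mul_inv_one_sub_exp_neg_div {x : ℝ} (hx : 0 < x) :
    IntegrableOn (fun u => u * exp (-u) * (1 - exp (-(u / x)))⁻¹) (Ioi 0) := by
  refine Integrable.of_integral_ne_zero ?_
  rw [← sq_mul_tsum_inv_add_sq_eq_integral hx]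
  have : 0 < ∑' k : ℕ, ((x + k) ^ 2)⁻¹ :=
    (summable_inv_add_sq x).tsum_pos (fun k => by positivity) 0 (by positivity)
  positivity

lemma two_mul_one_sub_exp_neg_le {s : ℝ} (hs : 0 ≤ s) :
    2 * (1 - exp (-s)) ≤ s * (1 + exp (-s)) := by
  let g : ℝ → ℝ := fun s => s * (1 + exp (-s)) - 2 * (1 - exp (-s))
  have hg : ∀ s, HasDerivAt g (1 - (1 + s) * exp (-s)) s := fun s => by
    have he := (hasDerivAt_neg s).exp
    refine (((hasDerivAt_id s).fun_mul (he.const_add 1)).fun_sub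
      ((he.const_sub 1).const_mul 2)).congr_deriv ?_
    simp only [id_eq]
    ring
  have hmono : MonotoneOn g (Ici 0) := by
    refine monotoneOn_of_hasDerivWithinAt_nonneg (convex_Ici 0)
      (fun s _ => (hg s).continuousAt.continuousWithinAt) (fun s _ => (hg s).hasDerivWithinAt)
      fun s _ => ?_
    rw [sub_nonneg, exp_neg, ← div_eq_mul_inv, div_le_one (exp_pos s), add_comm]
    exact add_one_le_exp s
  have := hmono self_mem_Ici hs hs
  simp only [g, neg_zero, exp_zero, zero_mul, sub_self] at this
  linarith

lemma one_sub_exp_neg_pos_s11 {s : ℝ} (hs : 0 < s) : 0 < 1 - exp (-s) :=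
  sub_pos.2 (exp_lt_one_iff.2 (neg_neg_of_pos hs))

lemma convexOn_inv_one_sub_exp_neg_inv :
    ConvexOn ℝ (Ioi 0) (fun t : ℝ => (1 - exp (-t⁻¹))⁻¹) := by
  set e : ℝ → ℝ := fun t => exp (-t⁻¹)
  have he : ∀ t ≠ 0, HasDerivAt e (e t / t ^ 2) t := fun t ht =>
    (hasDerivAt_inv ht).fun_neg.exp.congr_deriv (by simp only [e, neg_neg, div_eq_mul_inv])
  have hden : ∀ t > 0, 0 < 1 - e t := fun t ht => one_sub_exp_neg_pos_s11 (inv_pos.2 ht)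
  have h' : ∀ t > 0, HasDerivAt (fun t => (1 - e t)⁻¹) (e t / (t ^ 2 * (1 - e t) ^ 2)) t := by
    intro t ht
    refine (((he t ht.ne').const_sub 1).fun_inv (hden t ht).ne').congr_deriv ?_
    field_simp
  have h'' : ∀ t > 0, HasDerivAt (fun t => e t / (t ^ 2 * (1 - e t) ^ 2))
      (e t * (1 - 2 * t + (1 + 2 * t) * e t) / (t ^ 4 * (1 - e t) ^ 3)) t := by
    intro t ht
    have := hden t ht
    refine ((he t ht.ne').fun_div
      ((hasDerivAt_pow 2 t).fun_mul (((he t ht.ne').const_sub 1).fun_pow 2))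
      (by positivity)).congr_deriv ?_
    field_simp
    norm_num
    ring
  refine convexOn_of_hasDerivWithinAt2_nonneg (f' := fun t => e t / (t ^ 2 * (1 - e t) ^ 2))
    (f'' := fun t => e t * (1 - 2 * t + (1 + 2 * t) * e t) / (t ^ 4 * (1 - e t) ^ 3))
    (convex_Ioi 0) (fun t ht => (h' t ht).continuousAt.continuousWithinAt) ?_ ?_ ?_ <;>
    rw [interior_Ioi]
  · exact fun t ht => (h' t ht).hasDerivWithinAt
  · exact fun t ht => (h'' t ht).hasDerivWithinAt
  · intro t (ht : 0 < t)
    have key := mul_le_mul_of_nonneg_left (two_mul_one_sub_exp_neg_le (inv_pos.2 ht).le) ht.le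
    rw [← mul_assoc t t⁻¹, mul_inv_cancel₀ ht.ne', one_mul] at key
    have hnum : 0 ≤ 1 - 2 * t + (1 + 2 * t) * e t := by simp only [e]; linarith
    have := hden t ht
    positivity

lemma convexOn_inv_one_sub_exp_neg_div {u : ℝ} (hu : 0 < u) :
    ConvexOn ℝ (Ioi 0) (fun x : ℝ => (1 - exp (-(u / x)))⁻¹) := by
  refine ⟨convex_Ioi 0, fun x hx y hy a b ha hb hab => ?_⟩
  have := convexOn_inv_one_sub_exp_neg_inv.2 (div_pos hx hu) (div_pos hy hu) ha hb hab
  simpa only [smul_eq_mul, inv_div, ← mul_div_assoc, ← add_div] using this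

lemma convexOn_integral {α E : Type*} [MeasurableSpace α] {μ : Measure α} [AddCommMonoid E]
    [SMul ℝ E] {s : Set E} {f : α → E → ℝ} (hs : Convex ℝ s) (hf : ∀ᵐ a ∂μ, ConvexOn ℝ s (f a))
    (hint : ∀ x ∈ s, Integrable (fun a => f a x) μ) :
    ConvexOn ℝ s (fun x => ∫ a, f a x ∂μ) := by
  refine ⟨hs, fun x hx y hy a b ha hb hab => ?_⟩
  have hx' := (hint x hx).const_mul a
  have hy' := (hint y hy).const_mul b
  calc ∫ ω, f ω (a • x + b • y) ∂μ ≤ ∫ ω, (a * f ω x + b * f ω y) ∂μ :=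
        integral_mono_ae (hint _ (hs hx hy ha hb hab)) (hx'.add hy')
          (hf.mono fun ω h => h.2 hx hy ha hb hab)
    _ = a * ∫ ω, f ω x ∂μ + b * ∫ ω, f ω y ∂μ := by
        rw [integral_add hx' hy', integral_const_mul, integral_const_mul]

/-- The function `x ↦ x²·ψ'(x)` is convex on `(0,∞)`. -/
theorem convexOn_sq_mul_trigamma :
    ConvexOn ℝ (Ioi (0 : ℝ)) (fun x : ℝ => x ^ 2 * trigamma x) := by
  have hrepr : EqOn (fun x => ∫ u in Ioi 0, u * exp (-u) * (1 - exp (-(u / x)))⁻¹)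
      (fun x => x ^ 2 * trigamma x) (Ioi 0) := fun x (hx : 0 < x) => by
    simp only [trigamma_eq_tsum hx, sq_mul_tsum_inv_add_sq_eq_integral hx]
  refine (convexOn_integral (convex_Ioi 0) ?_
    fun x hx => integrableOn_mul_exp_neg_mul_inv_one_sub_exp_neg_div hx).congr hrepr
  filter_upwards [ae_restrict_mem measurableSet_Ioi] with u (hu : 0 < u)
  simpa only [smul_eq_mul, mul_assoc] using
    (convexOn_inv_one_sub_exp_neg_div hu).smul (c := u * exp (-u)) (by positivity)
end
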